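/- Any straight-line XOR circuit encoding the systematic [2^k, k+1] punctured Hadamard code uses at least 2^k − 2 XOR gates, for k ≥ 2. -/

import Mathlib

/-- The standard basis of `F_2^n`, i.e. the linear forms given by the `n` input bits. -/
def inputForms (n : ℕ) : List (Fin n → ZMod 2) :=
  (List.finRange n).map (fun i => fun t => if t = i then (1 : ZMod 2) else 0)

/-- The list of all values (linear forms over the `n` input bits) computed by a
straight-line XOR program: the inputs, followed by the outputs of the 2-input XOR
gates, each gate referring to two previously computed values by index. -/
def values (n : ℕ) (gates : List (ℕ × ℕ)) : List (Fin n → ZMod 2) :=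
  gates.foldl (fun acc g => acc ++ [acc.getD g.1 0 + acc.getD g.2 0]) (inputForms n)

/-- Validity of a straight-line program: each gate reads only previously computed
values (inputs or earlier gate outputs). -/
def ValidGates (n : ℕ) (gates : List (ℕ × ℕ)) : Prop :=
  ∀ i < gates.length, (gates.getD i (0, 0)).1 < n + i ∧ (gates.getD i (0, 0)).2 < n + i

/-- The outputs of the gates (the computed values other than the inputs). -/
def gateOutputs (n : ℕ) (gates : List (ℕ × ℕ)) : List (Fin n → ZMod 2) :=
  (values n gates).drop n

/-- Hamming weight of a linear form (vector of coefficients over `F_2`). -/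
def wt {n : ℕ} (v : Fin n → ZMod 2) : ℕ :=
  (Finset.univ.filter fun i => v i ≠ 0).card

/-!
The gates computing the odd-weight columns of weight `≥ 2` are `2^k - k - 1` distinct
forms; it remains to find `k - 1` further gates computing nonzero even-weight forms.
Since a weight-3 form is computed, some gate computes a weight-2 form `x_i + x_j`: the first
gate of weight `≥ 2` adds two forms of weight `≤ 1`. Substituting `x_j := x_i` turns the
circuit into one over `k` bits that still computes every weight-3 form; it kills `x_i + x_j`
and preserves parity, so no form that was zero or odd becomes nonzero even, and induction on
the number of bits produces the `k - 1` even gates.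
-/

open Finset

namespace List

variable {α β : Type*} {l : List α}

theorem countP_map_lt_countP {f : α → β} {p : α → Bool} {q : β → Bool}
    (h : ∀ x ∈ l, q (f x) → p x) {u : α} (hu : u ∈ l) (hpu : p u) (hqu : ¬q (f u)) :
    (l.map f).countP q < l.countP p := by
  have hsat : (l.filter (q ∘ f)).countP p = (l.map f).countP q := by
    rw [countP_map, countP_eq_length_filter (l := l), countP_eq_length.mpr]
    intro x hx
    rw [mem_filter] at hx
    exact h x hx.1 hx.2
  have hpos : 0 < (l.filter fun x => !(q ∘ f) x).countP p :=
    countP_pos_iff.mpr ⟨u, mem_filter.mpr ⟨hu, by simpa using hqu⟩, hpu⟩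
  rw [countP_eq_countP_filter_add l p (q ∘ f)]
  omega

theorem countP_add_countP_le_countP {p q r : α → Bool} (hpq : ∀ x ∈ l, p x → ¬q x)
    (hpr : ∀ x ∈ l, p x → r x) (hqr : ∀ x ∈ l, q x → r x) :
    l.countP p + l.countP q ≤ l.countP r := by
  induction l with
  | nil => simp
  | cons x l ih =>
    simp only [countP_cons]
    have := ih (fun y hy => hpq y (.tail x hy)) (fun y hy => hpr y (.tail x hy))
      (fun y hy => hqr y (.tail x hy))
    have := hpq x (.head l); have := hpr x (.head l); have := hqr x (.head l)
    split_ifs <;> simp_all <;> omega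

theorem card_le_countP [DecidableEq α] {s : Finset α} {p : α → Bool}
    (h : ∀ x ∈ s, x ∈ l ∧ p x) : #s ≤ l.countP p :=
  calc #s ≤ #(l.filter p).toFinset :=
        card_le_card fun x hx => by simpa [mem_filter] using h x hx
    _ ≤ (l.filter p).length := toFinset_card_le _
    _ = l.countP p := countP_eq_length_filter.symm

end List

inductive IsAddChain {V : Type*} [Add V] (B : Set V) : List V → Prop
  | nil : IsAddChain B []
  | append_mem {l : List V} {x : V} : IsAddChain B l → x ∈ B → IsAddChain B (l ++ [x])
  | append_add {l : List V} {a b : V} :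
      IsAddChain B l → a ∈ l → b ∈ l → IsAddChain B (l ++ [a + b])

namespace IsAddChain

variable {V W : Type*} [Add V] [Add W] {B : Set V} {l : List V}

theorem of_forall_mem (h : ∀ x ∈ l, x ∈ B) : IsAddChain B l := by
  induction l using List.reverseRecOn with
  | nil => exact nil
  | append_singleton l x ih =>
    simp only [List.mem_append, List.mem_singleton] at h
    exact (ih fun y hy => h y (.inl hy)).append_mem (h x (.inr rfl))

theorem map {F : Type*} [FunLike F V W] [AddHomClass F V W] (f : F) {B' : Set W}
    (hB : Set.MapsTo f B B') (hl : IsAddChain B l) : IsAddChain B' (l.map f) := by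
  induction hl with
  | nil => exact nil
  | append_mem _ hx ih => simpa using ih.append_mem (hB hx)
  | append_add _ ha hb ih =>
    simpa using ih.append_add (List.mem_map_of_mem ha) (List.mem_map_of_mem hb)

end IsAddChain

section Weight

variable {n : ℕ}

theorem ZMod.eq_one_of_ne_zero_mod_two {x : ZMod 2} (hx : x ≠ 0) : x = 1 := by
  revert x
  decide

def unitVectors (n : ℕ) : Set (Fin n → ZMod 2) := Set.range fun i => Pi.single i 1

theorem wt_add_le (a b : Fin n → ZMod 2) : wt (a + b) ≤ wt a + wt b :=
  calc wt (a + b) ≤ #(univ.filter (a · ≠ 0) ∪ univ.filter (b · ≠ 0)) := by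
        refine card_le_card fun i => ?_
        simp only [mem_filter, mem_univ, true_and, mem_union, Pi.add_apply]
        contrapose!
        rintro ⟨ha, hb⟩
        rw [ha, hb, add_zero]
    _ ≤ wt a + wt b := card_union_le _ _

theorem wt_single (i : Fin n) : wt (Pi.single i (1 : ZMod 2)) = 1 := by
  simp [wt, Pi.single_apply, filter_eq']

theorem wt_ne_zero_iff {v : Fin n → ZMod 2} : wt v ≠ 0 ↔ v ≠ 0 := hammingNorm_ne_zero_iff

theorem exists_wt_eq {m : ℕ} (hm : m ≤ n) : ∃ v : Fin n → ZMod 2, wt v = m := by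
  obtain ⟨s, -, hs⟩ := exists_subset_card_eq (s := (univ : Finset (Fin n))) (by simpa using hm)
  exact ⟨fun i => if i ∈ s then 1 else 0, by simpa [wt] using hs⟩

theorem eq_single_of_wt_eq_one {v : Fin n → ZMod 2} (hv : wt v = 1) :
    ∃ i, v = Pi.single i 1 := by
  obtain ⟨i, hsupp⟩ := card_eq_one.mp hv
  refine ⟨i, funext fun t => ?_⟩
  have ht := congrArg (t ∈ ·) hsupp
  simp only [mem_filter, mem_univ, true_and, mem_singleton, eq_iff_iff] at ht
  by_cases hti : t = i
  · subst hti
    simpa using ZMod.eq_one_of_ne_zero_mod_two (ht.mpr rfl)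
  · simpa [hti] using ht

theorem eq_single_add_single_of_wt_eq_two {v : Fin n → ZMod 2} (hv : wt v = 2) :
    ∃ i j, i ≠ j ∧ v = Pi.single i 1 + Pi.single j 1 := by
  obtain ⟨i, j, hij, hsupp⟩ := card_eq_two.mp hv
  refine ⟨i, j, hij, funext fun t => ?_⟩
  have ht := congrArg (t ∈ ·) hsupp
  simp only [mem_filter, mem_univ, true_and, mem_insert, mem_singleton, eq_iff_iff] at ht
  by_cases hti : t = i
  · subst hti
    simp [hij, ZMod.eq_one_of_ne_zero_mod_two (ht.mpr (.inl rfl))]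
  by_cases htj : t = j
  · subst htj
    simp [hti, ZMod.eq_one_of_ne_zero_mod_two (ht.mpr (.inr rfl))]
  · simpa [Pi.single_apply, hti, htj] using ht

theorem natCast_wt (v : Fin n → ZMod 2) : (wt v : ZMod 2) = ∑ i, v i := by
  rw [wt, card_filter, Nat.cast_sum]
  refine sum_congr rfl fun i _ => ?_
  generalize v i = x
  revert x
  decide

theorem even_wt_iff {v : Fin n → ZMod 2} : Even (wt v) ↔ ∑ i, v i = 0 := by
  rw [← natCast_wt, ZMod.natCast_eq_zero_iff_even]

theorem odd_wt_iff {v : Fin n → ZMod 2} : Odd (wt v) ↔ ∑ i, v i = 1 := by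
  rw [← Nat.not_even_iff_odd, even_wt_iff]
  generalize ∑ i, v i = x
  revert x
  decide

end Weight

theorem card_odd_wt (m : ℕ) : #{v : Fin (m + 1) → ZMod 2 | Odd (wt v)} = 2 ^ m := by
  have hcons (x : ZMod 2) (w : Fin m → ZMod 2) :
      Odd (wt (Fin.cons x w : Fin (m + 1) → ZMod 2)) ↔ x + ∑ i, w i = 1 := by
    simp only [odd_wt_iff, Fin.sum_univ_succ, Fin.cons_zero, Fin.cons_succ]
  let e : {v : Fin (m + 1) → ZMod 2 // Odd (wt v)} ≃ (Fin m → ZMod 2) :=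
    { toFun v := Fin.tail v.1
      invFun w := ⟨Fin.cons (1 - ∑ i, w i) w, (hcons _ w).mpr (sub_add_cancel _ _)⟩
      left_inv := fun ⟨v, hv⟩ => by
        rw [← Fin.cons_self_tail v, hcons] at hv
        simp [← eq_sub_of_add_eq hv]
      right_inv w := Fin.tail_cons _ _ }
  rw [← Fintype.card_subtype, Fintype.card_congr e]
  simp

theorem sub_succ_le_card_odd_wt_two_le (m : ℕ) :
    2 ^ m - (m + 1) ≤ #{v : Fin (m + 1) → ZMod 2 | Odd (wt v) ∧ 2 ≤ wt v} := by
  set T : Finset (Fin (m + 1) → ZMod 2) := {v | Odd (wt v) ∧ 2 ≤ wt v}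
  set U : Finset (Fin (m + 1) → ZMod 2) := univ.image fun i => Pi.single i 1
  have hsub : ({v | Odd (wt v)} : Finset (Fin (m + 1) → ZMod 2)) ⊆ T ∪ U := by
    intro v hv
    simp only [T, U, mem_filter, mem_univ, true_and, mem_union, mem_image] at hv ⊢
    by_cases h2 : 2 ≤ wt v
    · exact .inl ⟨hv, h2⟩
    · obtain ⟨i, rfl⟩ := eq_single_of_wt_eq_one (v := v) (by obtain ⟨r, hr⟩ := hv; omega)
      exact .inr ⟨i, rfl⟩
  have hU : #U ≤ m + 1 := card_image_le.trans_eq (by simp)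
  have := (card_le_card hsub).trans (card_union_le T U)
  rw [card_odd_wt] at this
  omega

theorem sub_succ_le_countP_odd_wt {m : ℕ} {l : List (Fin (m + 1) → ZMod 2)}
    (h : ∀ v : Fin (m + 1) → ZMod 2, Odd (wt v) → 2 ≤ wt v → v ∈ l) :
    2 ^ m - (m + 1) ≤ l.countP fun v => Odd (wt v) ∧ 2 ≤ wt v :=
  (sub_succ_le_card_odd_wt_two_le m).trans <| List.card_le_countP fun v hv => by
    simp only [mem_filter, mem_univ, true_and] at hv
    exact ⟨h v hv.1 hv.2, decide_eq_true hv⟩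

theorem countP_even_wt_add_countP_odd_wt_le {n : ℕ} (l : List (Fin n → ZMod 2)) :
    l.countP (fun v => v ≠ 0 ∧ Even (wt v)) + l.countP (fun v => Odd (wt v) ∧ 2 ≤ wt v) ≤
      l.countP fun v => 2 ≤ wt v := by
  refine List.countP_add_countP_le_countP (fun v _ => ?_) (fun v _ => ?_) (fun v _ => ?_) <;>
    simp only [decide_eq_true_eq, ← Nat.not_even_iff_odd, ← wt_ne_zero_iff]
  · tauto
  · rintro ⟨hv, r, hr⟩
    omega
  · exact And.right

section Merge

variable {n : ℕ} {M : Type*} [AddCommMonoid M]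

theorem Fin.removeNth_zero_right (j : Fin (n + 1)) : j.removeNth (0 : Fin (n + 1) → M) = 0 := rfl

/-- The substitution `x_j := x_{j.succAbove i}` acting on linear forms in `x_0, …, x_n`. -/
def mergeCoord (j : Fin (n + 1)) (i : Fin n) : (Fin (n + 1) → M) →+ (Fin n → M) where
  toFun v := j.removeNth v + Pi.single i (v j)
  map_zero' := by simp [Fin.removeNth_zero_right]
  map_add' a b := by
    rw [Pi.add_apply, Pi.single_add]
    change j.removeNth a + j.removeNth b + _ = _
    abel

theorem mergeCoord_apply (j : Fin (n + 1)) (i : Fin n) (v : Fin (n + 1) → M) :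
    mergeCoord j i v = j.removeNth v + Pi.single i (v j) := rfl

theorem mergeCoord_single_self (j : Fin (n + 1)) (i : Fin n) (c : M) :
    mergeCoord j i (Pi.single j c) = Pi.single i c := by
  rw [mergeCoord_apply, Pi.single_eq_same, Pi.single, Fin.removeNth_update,
    Fin.removeNth_zero_right, zero_add]

theorem mergeCoord_single_succAbove (j : Fin (n + 1)) (i m : Fin n) (c : M) :
    mergeCoord j i (Pi.single (j.succAbove m) c) = Pi.single m c := by
  rw [mergeCoord_apply, Pi.single_eq_of_ne (Fin.succAbove_ne j m).symm, Pi.single_zero,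
    add_zero, Pi.single, Fin.removeNth_update_succAbove, Fin.removeNth_zero_right]
  rfl

theorem mergeCoord_insertNth_zero (j : Fin (n + 1)) (i : Fin n) (w : Fin n → M) :
    mergeCoord j i (j.insertNth 0 w) = w := by
  simp [mergeCoord_apply]

theorem sum_mergeCoord (j : Fin (n + 1)) (i : Fin n) (v : Fin (n + 1) → M) :
    ∑ s, mergeCoord j i v s = ∑ t, v t := by
  simp [mergeCoord_apply, sum_add_distrib, Fin.sum_univ_succAbove v j, Fin.removeNth, add_comm]

end Merge

theorem wt_insertNth_zero {n : ℕ} (j : Fin (n + 1)) (w : Fin n → ZMod 2) :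
    wt (j.insertNth 0 w) = wt w := by
  simp [wt, card_filter, Fin.sum_univ_succAbove _ j]

theorem mergeCoord_single_succAbove_add_single_self {n : ℕ} (j : Fin (n + 1)) (i : Fin n) :
    mergeCoord j i (Pi.single (j.succAbove i) 1 + Pi.single j 1 : Fin (n + 1) → ZMod 2) = 0 := by
  rw [map_add, mergeCoord_single_self, mergeCoord_single_succAbove, ← Pi.single_add,
    CharTwo.add_self_eq_zero, Pi.single_zero]

theorem even_wt_mergeCoord_iff {n : ℕ} (j : Fin (n + 1)) (i : Fin n)
    (v : Fin (n + 1) → ZMod 2) : Even (wt (mergeCoord j i v)) ↔ Even (wt v) := by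
  rw [even_wt_iff, even_wt_iff, sum_mergeCoord]

theorem mapsTo_mergeCoord_unitVectors {n : ℕ} (j : Fin (n + 1)) (i : Fin n) :
    Set.MapsTo (mergeCoord j i) (unitVectors (n + 1)) (unitVectors n) := by
  rintro _ ⟨m, rfl⟩
  rcases Fin.eq_self_or_eq_succAbove j m with rfl | ⟨m, rfl⟩
  · exact ⟨i, (mergeCoord_single_self _ _ _).symm⟩
  · exact ⟨m, (mergeCoord_single_succAbove _ _ _ _).symm⟩

namespace IsAddChain

variable {n : ℕ} {l : List (Fin n → ZMod 2)}

theorem forall_wt_le_one (hl : IsAddChain (unitVectors n) l) (h2 : ∀ u ∈ l, wt u ≠ 2) :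
    ∀ v ∈ l, wt v ≤ 1 := by
  induction hl with
  | nil => simp
  | append_mem _ hx ih =>
    simp only [List.mem_append, List.mem_singleton] at h2 ⊢
    rintro v (hv | rfl)
    · exact ih (fun u hu => h2 u (.inl hu)) v hv
    · obtain ⟨i, rfl⟩ := hx
      exact (wt_single i).le
  | @append_add l a b _ ha hb ih =>
    simp only [List.mem_append, List.mem_singleton] at h2 ⊢
    have ih := ih fun u hu => h2 u (.inl hu)
    rintro v (hv | rfl)
    · exact ih v hv
    · have := wt_add_le a b
      have := ih a ha
      have := ih b hb
      have := h2 (a + b) (.inr rfl)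
      omega

theorem exists_wt_eq_two (hl : IsAddChain (unitVectors n) l) {v : Fin n → ZMod 2} (hv : v ∈ l)
    (h2 : 2 ≤ wt v) : ∃ u ∈ l, wt u = 2 := by
  by_contra! h
  have := hl.forall_wt_le_one h v hv
  omega

end IsAddChain

theorem sub_two_le_countP_even_wt {N : ℕ} {l : List (Fin N → ZMod 2)}
    (hl : IsAddChain (unitVectors N) l) (h3 : ∀ v : Fin N → ZMod 2, wt v = 3 → v ∈ l) :
    N - 2 ≤ l.countP fun v => v ≠ 0 ∧ Even (wt v) := by
  induction N with
  | zero => simp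
  | succ n ih =>
    rcases Nat.lt_or_ge n 2 with hn | hn
    · omega
    obtain ⟨v, hv⟩ := exists_wt_eq (n := n + 1) (m := 3) (by omega)
    obtain ⟨u, hu, hu2⟩ := hl.exists_wt_eq_two (h3 v hv) (by omega)
    obtain ⟨i, j, hij, rfl⟩ := eq_single_add_single_of_wt_eq_two hu2
    obtain ⟨i, rfl⟩ := Fin.exists_succAbove_eq hij
    have hmerged := ih (hl.map (mergeCoord j i) (mapsTo_mergeCoord_unitVectors j i)) fun w hw => by
      rw [← mergeCoord_insertNth_zero j i w]
      exact List.mem_map_of_mem (h3 _ (by rw [wt_insertNth_zero, hw]))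
    have hlt := List.countP_map_lt_countP (f := mergeCoord j i)
      (p := fun v => v ≠ 0 ∧ Even (wt v)) (q := fun v => v ≠ 0 ∧ Even (wt v))
      (fun x _ => by
        simp only [decide_eq_true_eq, even_wt_mergeCoord_iff, and_imp]
        exact fun hx he => ⟨fun h => hx (by rw [h, map_zero]), he⟩)
      hu (by simp [← wt_ne_zero_iff, hu2])
      (by simp [mergeCoord_single_succAbove_add_single_self])
    omega

section Circuit

variable {n : ℕ}

theorem inputForms_eq (n : ℕ) : inputForms n = (List.finRange n).map fun i => Pi.single i 1 := by
  refine congrArg (List.map · _) (funext fun i => funext fun t => ?_)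
  rw [Pi.single_apply]

theorem values_append (gates : List (ℕ × ℕ)) (g : ℕ × ℕ) :
    values n (gates ++ [g]) =
      values n gates ++ [(values n gates).getD g.1 0 + (values n gates).getD g.2 0] := by
  rw [values, values, List.foldl_append]
  rfl

theorem length_values (gates : List (ℕ × ℕ)) : (values n gates).length = n + gates.length := by
  induction gates using List.reverseRecOn with
  | nil => simp [values, inputForms]
  | append_singleton gates g ih => simp [values_append, ih, Nat.add_assoc]

theorem ValidGates.of_append {gates : List (ℕ × ℕ)} {g : ℕ × ℕ}
    (hv : ValidGates n (gates ++ [g])) :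
    ValidGates n gates ∧ g.1 < n + gates.length ∧ g.2 < n + gates.length := by
  refine ⟨fun i hi => ?_, by simpa using hv gates.length (by simp)⟩
  have := hv i (by simp; omega)
  rwa [List.getD_append _ _ _ _ hi] at this

theorem isAddChain_values {gates : List (ℕ × ℕ)} (hv : ValidGates n gates) :
    IsAddChain (unitVectors n) (values n gates) := by
  induction gates using List.reverseRecOn with
  | nil =>
    refine IsAddChain.of_forall_mem fun x hx => ?_
    rw [values, List.foldl_nil, inputForms_eq, List.mem_map] at hx
    obtain ⟨i, -, rfl⟩ := hx
    exact ⟨i, rfl⟩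
  | append_singleton gates g ih =>
    obtain ⟨hv, h1, h2⟩ := hv.of_append
    rw [values_append]
    have hmem {t : ℕ} (ht : t < n + gates.length) :
        (values n gates).getD t 0 ∈ values n gates := by
      rw [← length_values] at ht
      rw [List.getD_eq_getElem _ _ ht]
      exact List.getElem_mem ht
    exact (ih hv).append_add (hmem h1) (hmem h2)

theorem countP_two_le_wt_values_le (gates : List (ℕ × ℕ)) :
    (values n gates).countP (fun v => 2 ≤ wt v) ≤ gates.length := by
  induction gates using List.reverseRecOn with
  | nil => simp [values, inputForms_eq, wt_single]
  | append_singleton gates g ih =>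
    rw [values_append, List.countP_append, List.length_append]
    exact Nat.add_le_add ih List.countP_le_length

end Circuit

theorem stmt_17_general (k : ℕ) (gates : List (ℕ × ℕ))
    (hv : ValidGates (k + 1) gates)
    (hcomp : ∀ v : Fin (k + 1) → ZMod 2, Odd (wt v) → 2 ≤ wt v →
      v ∈ values (k + 1) gates) :
    2 ^ k - 2 ≤ gates.length := by
  have heven := sub_two_le_countP_even_wt (isAddChain_values hv) fun v hv3 =>
    hcomp v (by rw [hv3]; decide) (by omega)
  have hodd := sub_succ_le_countP_odd_wt hcomp
  have hsplit := countP_even_wt_add_countP_odd_wt_le (values (k + 1) gates)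
  have hgates := countP_two_le_wt_values_le (n := k + 1) gates
  have hpow : k + 1 ≤ 2 ^ k := Nat.lt_two_pow_self
  omega

/-- Any straight-line XOR circuit over the `k+1` message bits (`k ≥ 2`) encoding the
systematic `[2^k, k+1]` punctured Hadamard code — i.e. computing every codeword
coordinate whose encoding column has weight `≥ 2`, the columns being exactly all
odd-weight vectors of `F_2^{k+1}` — uses at least `2^k − 2` XOR gates. -/
theorem stmt_17 (k : ℕ) (hk : 2 ≤ k) (gates : List (ℕ × ℕ))
    (hv : ValidGates (k + 1) gates)
    (hcomp : ∀ v : Fin (k + 1) → ZMod 2, Odd (wt v) → 2 ≤ wt v →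
      v ∈ values (k + 1) gates) :
    2 ^ k - 2 ≤ gates.length :=
  stmt_17_general k gates hv hcomp
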